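/- arXiv:2511.10895 — 2 statements merged into one kernel-verified Lean document; each statement's English description precedes it below -/
import Mathlib

section
/- Let t ≥ 3 be an integer, and let Q be a (2P_3, C_4, C_6, C_7, T_0, (t+1)-pentagon)-free t-frame with an associated t-frame partition (A; B_1, …, B_t; C_1, …, C_t), and set B := B_1 ∪ … ∪ B_t. Then: (a) the sets A, B_1, …, B_t, C_1, …, C_t are all cliques; (b) if A is complete to B, then Q is a t-villa with associated t-villa partition (A; B_1, …, B_t; C_1, …, C_t); (c) if A is not complete to B, then t = 3, each B_i is complete to C_i, and Q is a 5-basket with associated 5-basket partition (A; B_1, B_2, B_3; C_1, C_2, C_3; ∅). -/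
namespace Paper

open SimpleGraph

variable {V : Type} {W : Type}

/-- `G` contains no induced copy of `H` (there is no graph embedding of `H` into `G`). -/
def IndFree (G : SimpleGraph V) (H : SimpleGraph W) : Prop :=
  IsEmpty (H ↪g G)

/-- `2P₃`: the disjoint union of two paths on three vertices. -/
def twoP3 : SimpleGraph (Fin 3 ⊕ Fin 3) :=
  SimpleGraph.fromRel (fun u v =>
    match u, v with
    | Sum.inl a, Sum.inl b => (pathGraph 3).Adj a b
    | Sum.inr a, Sum.inr b => (pathGraph 3).Adj a b
    | _, _ => False)

/-- `4K₁`: the edgeless graph on four vertices. -/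
def fourK1 : SimpleGraph (Fin 4) := ⊥

/-- The cycle on `n` vertices (for `n ≥ 3`). -/
def cycleG (n : ℕ) : SimpleGraph (ZMod n) :=
  SimpleGraph.fromRel (fun u v => v = u + 1)

/-- The graph `T₀`: vertices `0,…,8` stand for `a₀,a₁,b₀,b₁,b₂,b₃,c₁,c₂,c₃`. -/
def T0 : SimpleGraph (Fin 9) :=
  SimpleGraph.fromRel (fun u v =>
    (u, v) ∈ ([(0,1),(0,2),(0,4),(0,5),(1,3),(1,4),(1,5),(2,6),(3,6),
               (4,7),(5,8),(6,7),(6,8),(7,8)] : List (Fin 9 × Fin 9)))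

/-- The `t`-pentagon: `Sum.inl ()` is the vertex `a`, `Sum.inr (Sum.inl i)` is `bᵢ`,
and `Sum.inr (Sum.inr i)` is `cᵢ`. -/
def pentagon (t : ℕ) : SimpleGraph (Unit ⊕ Fin t ⊕ Fin t) :=
  SimpleGraph.fromRel (fun u v =>
    match u, v with
    | Sum.inl _, Sum.inr (Sum.inl _) => True
    | Sum.inr (Sum.inl i), Sum.inr (Sum.inr j) => i = j
    | Sum.inr (Sum.inr _), Sum.inr (Sum.inr _) => True
    | _, _ => False)

/-- `X` is complete to `Y` in `G`. -/
def CompleteTo (G : SimpleGraph V) (X Y : Set V) : Prop :=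
  ∀ x ∈ X, ∀ y ∈ Y, G.Adj x y

/-- `X` is anticomplete to `Y` in `G`. -/
def AnticompleteTo (G : SimpleGraph V) (X Y : Set V) : Prop :=
  ∀ x ∈ X, ∀ y ∈ Y, ¬ G.Adj x y

/-- A simplicial vertex: its neighborhood is a clique. -/
def IsSimplicial (G : SimpleGraph V) (v : V) : Prop :=
  G.IsClique (G.neighborSet v)

/-- A universal vertex: adjacent to all other vertices. -/
def IsUniversal (G : SimpleGraph V) (v : V) : Prop :=
  ∀ w, w ≠ v → G.Adj v w




/-- A 5-basket partition `(A; B 0, B 1, B 2; C 0, C 1, C 2; F)` of `Q`. -/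
def IsFiveBasketPartition (Q : SimpleGraph W) (A : Set W) (B C : Fin 3 → Set W)
    (F : Set W) : Prop :=
  (∀ i, Disjoint A (B i)) ∧ (∀ i, Disjoint A (C i)) ∧ Disjoint A F ∧
  (∀ i j, i ≠ j → Disjoint (B i) (B j)) ∧
  (∀ i j, i ≠ j → Disjoint (C i) (C j)) ∧
  (∀ i j, Disjoint (B i) (C j)) ∧
  (∀ i, Disjoint (B i) F) ∧ (∀ i, Disjoint (C i) F) ∧
  (A ∪ (⋃ i, B i) ∪ (⋃ i, C i) ∪ F = Set.univ) ∧
  Q.IsClique A ∧ (∀ i, Q.IsClique (B i)) ∧ (∀ i, Q.IsClique (C i)) ∧ Q.IsClique F ∧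
  A.Nonempty ∧ (∀ i, (B i).Nonempty) ∧ (∀ i, (C i).Nonempty) ∧
  (∀ i j, i ≠ j → AnticompleteTo Q (B i) (B j)) ∧
  (∀ i j, i ≠ j → CompleteTo Q (C i) (C j)) ∧
  (∀ i, AnticompleteTo Q A (C i)) ∧
  (∀ i, CompleteTo Q (B i) (C i)) ∧
  (∀ i j, i ≠ j → AnticompleteTo Q (B i) (C j)) ∧
  (∃ istar : Fin 3,
    (∀ i, i ≠ istar → CompleteTo Q A (B i)) ∧
    (∀ a ∈ A, ∀ a' ∈ A,
      Q.neighborSet a ∩ B istar ⊆ Q.neighborSet a' ∩ B istar ∨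
      Q.neighborSet a' ∩ B istar ⊆ Q.neighborSet a ∩ B istar) ∧
    (∃ a ∈ A, B istar ⊆ Q.neighborSet a)) ∧
  (∃ jstar : Fin 3,
    CompleteTo Q F (B jstar ∪ C jstar ∪ F)ᶜ ∧
    AnticompleteTo Q F (B jstar ∪ C jstar))

/-- A 5-basket. -/
def IsFiveBasket (Q : SimpleGraph W) : Prop :=
  ∃ (A : Set W) (B C : Fin 3 → Set W) (F : Set W), IsFiveBasketPartition Q A B C F

/-- All conditions of a `t`-villa partition except that the parts exhaust the vertex set. -/
def VillaCore {t : ℕ} (Q : SimpleGraph W) (A : Set W) (B C : Fin t → Set W) : Prop :=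
  (∀ i, Disjoint A (B i)) ∧ (∀ i, Disjoint A (C i)) ∧
  (∀ i j, i ≠ j → Disjoint (B i) (B j)) ∧
  (∀ i j, i ≠ j → Disjoint (C i) (C j)) ∧
  (∀ i j, Disjoint (B i) (C j)) ∧
  Q.IsClique A ∧ (∀ i, Q.IsClique (B i)) ∧ (∀ i, Q.IsClique (C i)) ∧
  A.Nonempty ∧ (∀ i, (B i).Nonempty) ∧ (∀ i, (C i).Nonempty) ∧
  (∀ i, CompleteTo Q A (B i)) ∧ (∀ i, AnticompleteTo Q A (C i)) ∧
  (∀ i j, i ≠ j → AnticompleteTo Q (B i) (B j)) ∧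
  (∀ i j, i ≠ j → CompleteTo Q (C i) (C j)) ∧
  (∀ i j, i ≠ j → AnticompleteTo Q (B i) (C j)) ∧
  (∀ i, ∀ b ∈ B i, ∀ b' ∈ B i,
     Q.neighborSet b ∩ C i ⊆ Q.neighborSet b' ∩ C i ∨
     Q.neighborSet b' ∩ C i ⊆ Q.neighborSet b ∩ C i) ∧
  (∀ i, ∀ b ∈ B i, (Q.neighborSet b ∩ C i).Nonempty) ∧
  (∀ i, ∃ b ∈ B i, C i ⊆ Q.neighborSet b)

/-- A `t`-villa partition `(A; B 0,…,B (t-1); C 0,…,C (t-1))` of `Q`. -/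
def IsVillaPartition {t : ℕ} (Q : SimpleGraph W) (A : Set W) (B C : Fin t → Set W) : Prop :=
  VillaCore Q A B C ∧ A ∪ (⋃ i, B i) ∪ (⋃ i, C i) = Set.univ

/-- A `t`-villa. -/
def IsTVilla (t : ℕ) (Q : SimpleGraph W) : Prop :=
  ∃ (A : Set W) (B C : Fin t → Set W), IsVillaPartition Q A B C

/-- A villa: a `t`-villa for some `t ≥ 3`. -/
def IsVilla (Q : SimpleGraph W) : Prop :=
  ∃ t, 3 ≤ t ∧ IsTVilla t Q

/-- A `t`-mansion partition `(A; B; C; F; X; Y)` of `Q`. -/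
def IsMansionPartition {t : ℕ} (Q : SimpleGraph W) (A : Set W) (B C : Fin t → Set W)
    (F X Y : Set W) : Prop :=
  VillaCore Q A B C ∧
  Disjoint A F ∧ Disjoint A X ∧ Disjoint A Y ∧
  (∀ i, Disjoint (B i) F) ∧ (∀ i, Disjoint (B i) X) ∧ (∀ i, Disjoint (B i) Y) ∧
  (∀ i, Disjoint (C i) F) ∧ (∀ i, Disjoint (C i) X) ∧ (∀ i, Disjoint (C i) Y) ∧
  Disjoint F X ∧ Disjoint F Y ∧ Disjoint X Y ∧
  (A ∪ (⋃ i, B i) ∪ (⋃ i, C i) ∪ F ∪ X ∪ Y = Set.univ) ∧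
  Q.IsClique F ∧ Q.IsClique X ∧ Q.IsClique Y ∧ F.Nonempty ∧
  (∃ jstar : Fin t,
    CompleteTo Q F A ∧
    (∀ i, i ≠ jstar → CompleteTo Q F (B i)) ∧
    (∀ i, i ≠ jstar → CompleteTo Q F (C i)) ∧
    AnticompleteTo Q F (B jstar) ∧ AnticompleteTo Q F (C jstar) ∧
    CompleteTo Q (B jstar) (C jstar) ∧
    CompleteTo Q X A ∧ CompleteTo Q X (B jstar) ∧
    (∀ i, i ≠ jstar → AnticompleteTo Q X (B i)) ∧
    (∀ i, AnticompleteTo Q X (C i))) ∧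
  CompleteTo Q F X ∧ CompleteTo Q F Y ∧
  AnticompleteTo Q X Y ∧
  (∀ i, CompleteTo Q Y (C i)) ∧
  AnticompleteTo Q Y A ∧ (∀ i, AnticompleteTo Q Y (B i))

/-- A `t`-mansion. -/
def IsTMansion (t : ℕ) (Q : SimpleGraph W) : Prop :=
  ∃ (A : Set W) (B C : Fin t → Set W) (F X Y : Set W),
    IsMansionPartition Q A B C F X Y

/-- A mansion: a `t`-mansion for some `t ≥ 3`. -/
def IsMansion (Q : SimpleGraph W) : Prop :=
  ∃ t, 3 ≤ t ∧ IsTMansion t Q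

/-- A `t`-frame partition of `Q`. -/
def IsFramePartition {t : ℕ} (Q : SimpleGraph W) (A : Set W) (B C : Fin t → Set W) : Prop :=
  (∀ i, Disjoint A (B i)) ∧ (∀ i, Disjoint A (C i)) ∧
  (∀ i j, i ≠ j → Disjoint (B i) (B j)) ∧
  (∀ i j, i ≠ j → Disjoint (C i) (C j)) ∧
  (∀ i j, Disjoint (B i) (C j)) ∧
  (A ∪ (⋃ i, B i) ∪ (⋃ i, C i) = Set.univ) ∧
  A.Nonempty ∧ (∀ i, (B i).Nonempty) ∧ (∀ i, (C i).Nonempty) ∧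
  (∀ a ∈ A, ∃ i j : Fin t, i ≠ j ∧ (∃ b ∈ B i, Q.Adj a b) ∧ (∃ b ∈ B j, Q.Adj a b)) ∧
  (∀ i, AnticompleteTo Q A (C i)) ∧
  (∀ i j, i ≠ j → AnticompleteTo Q (B i) (B j)) ∧
  (∀ i j, i ≠ j → CompleteTo Q (C i) (C j)) ∧
  (∀ i j, i ≠ j → AnticompleteTo Q (B i) (C j)) ∧
  (∀ i, ∀ b ∈ B i, ∃ a ∈ A, Q.Adj b a) ∧
  (∀ i, ∀ b ∈ B i, ∃ c ∈ C i, Q.Adj b c) ∧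
  (∀ i, ∀ c ∈ C i, ∃ b ∈ B i, Q.Adj c b)

/-- A `k`-ring partition of `Q` (indices modulo `k`). -/
def IsRingPartition {k : ℕ} (Q : SimpleGraph W) (X : ZMod k → Set W) : Prop :=
  (∀ i j, i ≠ j → Disjoint (X i) (X j)) ∧
  (⋃ i, X i) = Set.univ ∧
  (∀ i, (X i).Nonempty) ∧
  (∀ i, ∀ u ∈ X i, X i ⊆ insert u (Q.neighborSet u)) ∧
  (∀ i, ∀ u ∈ X i, ∀ u' ∈ X i,
     insert u (Q.neighborSet u) ⊆ insert u' (Q.neighborSet u') ∨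
     insert u' (Q.neighborSet u') ⊆ insert u (Q.neighborSet u)) ∧
  (∀ i, ∀ u ∈ X i, insert u (Q.neighborSet u) ⊆ X (i-1) ∪ X i ∪ X (i+1)) ∧
  (∀ i, ∃ u ∈ X i, X (i-1) ∪ X i ∪ X (i+1) ⊆ insert u (Q.neighborSet u))

/-- A `k`-ring. -/
def IsRing (k : ℕ) (Q : SimpleGraph W) : Prop :=
  ∃ X : ZMod k → Set W, IsRingPartition Q X

/-- A 5-crown. -/
def IsFiveCrown (Q : SimpleGraph W) : Prop :=
  ∃ X : ZMod 5 → Set W, IsRingPartition Q X ∧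
    ∃ istar : ZMod 5, CompleteTo Q (X (istar - 1)) (X (istar - 2)) ∧
      CompleteTo Q (X (istar + 1)) (X (istar + 2))

/-!
Every step exhibits a forbidden induced subgraph among a few well-chosen vertices, all other
adjacencies being prescribed by the frame. Two non-adjacent vertices of `C i`, with private
neighbours `b, b'` in `B i`, give a `T₀` or `C₆` if `b ~ b'` and a `C₆`, `C₇` or `2P₃` otherwise.
A common neighbour in `A` of two non-adjacent vertices of `B i` gives a `C₄` or a `(t+1)`-pentagon
with two petals in class `i`; without one, their neighbours in `A` and in the other classes give a
`C₆`, `C₇`, `T₀` or `2P₃`. By `C₄`-freeness the neighbourhoods of the vertices of a clique in a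
disjoint clique form a chain; a largest one gives the villa when `A` is complete to `B`. Otherwise
a vertex of `A` missing some `b₀ ∈ B i₀` sees two other classes and rules out a fourth one (`2P₃`),
so `t = 3`; then all of `A` is complete to the two other classes, and the chain of neighbourhoods
of `A` in `B i₀` gives the 5-basket.
-/

theorem exists_ne_ne_ne_of_three_lt {n : ℕ} (h : 3 < n) (i j k : Fin n) :
    ∃ l, l ≠ i ∧ l ≠ j ∧ l ≠ k := by
  by_contra! hc
  have hsub : (Finset.univ : Finset (Fin n)) ⊆ {i, j, k} := fun l _ => by
    have := hc l
    simp only [Finset.mem_insert, Finset.mem_singleton]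
    tauto
  have := (Finset.card_le_card hsub).trans Finset.card_le_three
  simp only [Finset.card_univ, Fintype.card_fin] at this
  omega

section InducedCopies

variable {α : Type} {Q : SimpleGraph W} {H : SimpleGraph α}

theorem IndFree.false_of_adj_iff (hQ : IndFree Q H) {f : α → W} (hf : Function.Injective f)
    (hadj : ∀ u v, Q.Adj (f u) (f v) ↔ H.Adj u v) : False :=
  hQ.false ⟨⟨f, hf⟩, hadj _ _⟩

def IsTwinFree (H : SimpleGraph α) : Prop :=
  ∀ u v, (∀ w, H.Adj u w ↔ H.Adj v w) → u = v

theorem injective_of_adj_iff {f : α → W} (hadj : ∀ u v, Q.Adj (f u) (f v) ↔ H.Adj u v)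
    (htwin : ∀ u v, (∀ w, H.Adj u w ↔ H.Adj v w) → f u = f v → u = v) : Function.Injective f :=
  fun u v huv => htwin u v (fun w => by rw [← hadj, ← hadj, huv]) huv

theorem IndFree.false_of_twinFree (hQ : IndFree Q H) (hH : IsTwinFree H) {f : α → W}
    (hadj : ∀ u v, Q.Adj (f u) (f v) ↔ H.Adj u v) : False :=
  hQ.false_of_adj_iff (injective_of_adj_iff hadj fun u v h _ => hH u v h) hadj

instance {n : ℕ} : DecidableRel (cycleG n).Adj := by unfold cycleG; infer_instance

instance : DecidableRel T0.Adj := by unfold T0; infer_instance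

theorem IndFree.false_of_cycle4 (hQ : IndFree Q (cycleG 4)) (v₀ v₁ v₂ v₃ : W)
    (h01 : Q.Adj v₀ v₁) (h12 : Q.Adj v₁ v₂) (h23 : Q.Adj v₂ v₃) (h30 : Q.Adj v₃ v₀)
    (n02 : ¬Q.Adj v₀ v₂) (n13 : ¬Q.Adj v₁ v₃) (d02 : v₀ ≠ v₂) (d13 : v₁ ≠ v₃) : False := by
  have hv : ∀ z : ZMod 4, z = 0 ∨ z = 1 ∨ z = 2 ∨ z = 3 := by decide
  have hadj : ∀ u v, Q.Adj (![v₀, v₁, v₂, v₃] u) (![v₀, v₁, v₂, v₃] v) ↔ (cycleG 4).Adj u v := by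
    intro u v
    rcases hv u with rfl | rfl | rfl | rfl <;> rcases hv v with rfl | rfl | rfl | rfl <;>
      first
      | exact iff_of_false Q.irrefl (by decide)
      | exact iff_of_true ‹_› (by decide)
      | exact iff_of_true (Adj.symm ‹_›) (by decide)
      | exact iff_of_false ‹_› (by decide)
      | exact iff_of_false (fun h => absurd h.symm ‹_›) (by decide)
  have htwins : ∀ u v : ZMod 4, (∀ w, (cycleG 4).Adj u w ↔ (cycleG 4).Adj v w) →
      u = v ∨ (u = 0 ∧ v = 2) ∨ (u = 2 ∧ v = 0) ∨ (u = 1 ∧ v = 3) ∨ (u = 3 ∧ v = 1) := by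
    decide
  refine hQ.false_of_adj_iff (injective_of_adj_iff hadj fun u v h huv => ?_) hadj
  rcases htwins u v h with h | ⟨rfl, rfl⟩ | ⟨rfl, rfl⟩ | ⟨rfl, rfl⟩ | ⟨rfl, rfl⟩
  exacts [h, (d02 huv).elim, (d02 huv.symm).elim, (d13 huv).elim, (d13 huv.symm).elim]

theorem IndFree.false_of_cycle6 (hQ : IndFree Q (cycleG 6)) (v₀ v₁ v₂ v₃ v₄ v₅ : W)
    (h01 : Q.Adj v₀ v₁) (h12 : Q.Adj v₁ v₂) (h23 : Q.Adj v₂ v₃) (h34 : Q.Adj v₃ v₄)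
    (h45 : Q.Adj v₄ v₅) (h50 : Q.Adj v₅ v₀)
    (n02 : ¬Q.Adj v₀ v₂) (n03 : ¬Q.Adj v₀ v₃) (n04 : ¬Q.Adj v₀ v₄) (n13 : ¬Q.Adj v₁ v₃)
    (n14 : ¬Q.Adj v₁ v₄) (n15 : ¬Q.Adj v₁ v₅) (n24 : ¬Q.Adj v₂ v₄) (n25 : ¬Q.Adj v₂ v₅)
    (n35 : ¬Q.Adj v₃ v₅) : False := by
  have hv : ∀ z : ZMod 6, z = 0 ∨ z = 1 ∨ z = 2 ∨ z = 3 ∨ z = 4 ∨ z = 5 := by decide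
  refine hQ.false_of_twinFree (f := ![v₀, v₁, v₂, v₃, v₄, v₅]) (by unfold IsTwinFree; decide)
    fun u v => ?_
  rcases hv u with rfl | rfl | rfl | rfl | rfl | rfl <;>
    rcases hv v with rfl | rfl | rfl | rfl | rfl | rfl <;>
    first
    | exact iff_of_false Q.irrefl (by decide)
    | exact iff_of_true ‹_› (by decide)
    | exact iff_of_true (Adj.symm ‹_›) (by decide)
    | exact iff_of_false ‹_› (by decide)
    | exact iff_of_false (fun h => absurd h.symm ‹_›) (by decide)

theorem IndFree.false_of_cycle7 (hQ : IndFree Q (cycleG 7)) (v₀ v₁ v₂ v₃ v₄ v₅ v₆ : W)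
    (h01 : Q.Adj v₀ v₁) (h12 : Q.Adj v₁ v₂) (h23 : Q.Adj v₂ v₃) (h34 : Q.Adj v₃ v₄)
    (h45 : Q.Adj v₄ v₅) (h56 : Q.Adj v₅ v₆) (h60 : Q.Adj v₆ v₀)
    (n02 : ¬Q.Adj v₀ v₂) (n03 : ¬Q.Adj v₀ v₃) (n04 : ¬Q.Adj v₀ v₄) (n05 : ¬Q.Adj v₀ v₅)
    (n13 : ¬Q.Adj v₁ v₃) (n14 : ¬Q.Adj v₁ v₄) (n15 : ¬Q.Adj v₁ v₅) (n16 : ¬Q.Adj v₁ v₆)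
    (n24 : ¬Q.Adj v₂ v₄) (n25 : ¬Q.Adj v₂ v₅) (n26 : ¬Q.Adj v₂ v₆) (n35 : ¬Q.Adj v₃ v₅)
    (n36 : ¬Q.Adj v₃ v₆) (n46 : ¬Q.Adj v₄ v₆) : False := by
  have hv : ∀ z : ZMod 7, z = 0 ∨ z = 1 ∨ z = 2 ∨ z = 3 ∨ z = 4 ∨ z = 5 ∨ z = 6 := by decide
  refine hQ.false_of_twinFree (f := ![v₀, v₁, v₂, v₃, v₄, v₅, v₆]) (by unfold IsTwinFree; decide)
    fun u v => ?_
  rcases hv u with rfl | rfl | rfl | rfl | rfl | rfl | rfl <;>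
    rcases hv v with rfl | rfl | rfl | rfl | rfl | rfl | rfl <;>
    first
    | exact iff_of_false Q.irrefl (by decide)
    | exact iff_of_true ‹_› (by decide)
    | exact iff_of_true (Adj.symm ‹_›) (by decide)
    | exact iff_of_false ‹_› (by decide)
    | exact iff_of_false (fun h => absurd h.symm ‹_›) (by decide)

theorem IndFree.false_of_T0 (hQ : IndFree Q T0) (v₀ v₁ v₂ v₃ v₄ v₅ v₆ v₇ v₈ : W)
    (h01 : Q.Adj v₀ v₁) (h02 : Q.Adj v₀ v₂) (h04 : Q.Adj v₀ v₄) (h05 : Q.Adj v₀ v₅)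
    (h13 : Q.Adj v₁ v₃) (h14 : Q.Adj v₁ v₄) (h15 : Q.Adj v₁ v₅) (h26 : Q.Adj v₂ v₆)
    (h36 : Q.Adj v₃ v₆) (h47 : Q.Adj v₄ v₇) (h58 : Q.Adj v₅ v₈) (h67 : Q.Adj v₆ v₇)
    (h68 : Q.Adj v₆ v₈) (h78 : Q.Adj v₇ v₈)
    (n03 : ¬Q.Adj v₀ v₃) (n06 : ¬Q.Adj v₀ v₆) (n07 : ¬Q.Adj v₀ v₇) (n08 : ¬Q.Adj v₀ v₈)
    (n12 : ¬Q.Adj v₁ v₂) (n16 : ¬Q.Adj v₁ v₆) (n17 : ¬Q.Adj v₁ v₇) (n18 : ¬Q.Adj v₁ v₈)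
    (n23 : ¬Q.Adj v₂ v₃) (n24 : ¬Q.Adj v₂ v₄) (n25 : ¬Q.Adj v₂ v₅) (n27 : ¬Q.Adj v₂ v₇)
    (n28 : ¬Q.Adj v₂ v₈) (n34 : ¬Q.Adj v₃ v₄) (n35 : ¬Q.Adj v₃ v₅) (n37 : ¬Q.Adj v₃ v₇)
    (n38 : ¬Q.Adj v₃ v₈) (n45 : ¬Q.Adj v₄ v₅) (n46 : ¬Q.Adj v₄ v₆) (n48 : ¬Q.Adj v₄ v₈)
    (n56 : ¬Q.Adj v₅ v₆) (n57 : ¬Q.Adj v₅ v₇) : False := by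
  refine hQ.false_of_twinFree (f := ![v₀, v₁, v₂, v₃, v₄, v₅, v₆, v₇, v₈])
    (by unfold IsTwinFree; decide) fun u v => ?_
  fin_cases u <;> fin_cases v <;>
    first
    | exact iff_of_false Q.irrefl (by decide)
    | exact iff_of_true ‹_› (by decide)
    | exact iff_of_true (Adj.symm ‹_›) (by decide)
    | exact iff_of_false ‹_› (by decide)
    | exact iff_of_false (fun h => absurd h.symm ‹_›) (by decide)

theorem IndFree.false_of_twoP3 (hQ : IndFree Q twoP3) (v₀ v₁ v₂ v₃ v₄ v₅ : W)
    (h01 : Q.Adj v₀ v₁) (h12 : Q.Adj v₁ v₂) (h34 : Q.Adj v₃ v₄) (h45 : Q.Adj v₄ v₅)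
    (n02 : ¬Q.Adj v₀ v₂) (n03 : ¬Q.Adj v₀ v₃) (n04 : ¬Q.Adj v₀ v₄) (n05 : ¬Q.Adj v₀ v₅)
    (n13 : ¬Q.Adj v₁ v₃) (n14 : ¬Q.Adj v₁ v₄) (n15 : ¬Q.Adj v₁ v₅) (n23 : ¬Q.Adj v₂ v₃)
    (n24 : ¬Q.Adj v₂ v₄) (n25 : ¬Q.Adj v₂ v₅) (n35 : ¬Q.Adj v₃ v₅)
    (d02 : v₀ ≠ v₂) (d35 : v₃ ≠ v₅) : False := by
  let f : Fin 3 ⊕ Fin 3 → W := Sum.elim ![v₀, v₁, v₂] ![v₃, v₄, v₅]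
  have hadj : ∀ u v, Q.Adj (f u) (f v) ↔ twoP3.Adj u v := by
    intro u v
    fin_cases u <;> fin_cases v <;> simp [f, twoP3, fromRel_adj, pathGraph_adj] <;>
      first
      | assumption
      | exact Adj.symm ‹_›
      | exact fun h => absurd h.symm ‹_›
  refine hQ.false_of_adj_iff (injective_of_adj_iff hadj fun u v h huv => ?_) hadj
  fin_cases u <;> fin_cases v <;> first
    | rfl
    | exact (d02 huv).elim
    | exact (d02 huv.symm).elim
    | exact (d35 huv).elim
    | exact (d35 huv.symm).elim
    | simpa [twoP3, fromRel_adj, pathGraph_adj] using h (Sum.inl 1)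
    | simpa [twoP3, fromRel_adj, pathGraph_adj] using h (Sum.inr 1)
    | simpa [twoP3, fromRel_adj, pathGraph_adj] using h (Sum.inl 0)

theorem isTwinFree_pentagon {n : ℕ} (hn : 2 ≤ n) : IsTwinFree (pentagon n) := by
  have hother : ∀ i : Fin n, ∃ k, k ≠ i :=
    Fintype.exists_ne_of_one_lt_card (by rw [Fintype.card_fin]; omega)
  rintro (⟨⟩ | i | i) (⟨⟩ | j | j) h
  · rfl
  · simpa [pentagon, fromRel_adj] using h (.inr (.inl j))
  · obtain ⟨k, hk⟩ := hother j
    simpa [pentagon, fromRel_adj, hk] using h (.inr (.inl k))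
  · simpa [pentagon, fromRel_adj] using h (.inr (.inl i))
  · simpa [pentagon, fromRel_adj, eq_comm] using h (.inr (.inr i))
  · simpa [pentagon, fromRel_adj] using h (.inl ())
  · obtain ⟨k, hk⟩ := hother i
    simpa [pentagon, fromRel_adj, hk] using h (.inr (.inl k))
  · simpa [pentagon, fromRel_adj] using h (.inl ())
  · simpa [pentagon, fromRel_adj, eq_comm] using h (.inr (.inl i))

theorem IndFree.false_of_pentagon {ι : Type} {n : ℕ} (hQ : IndFree Q (pentagon n)) (hn : 2 ≤ n)
    (e : ι ≃ Fin n) (a : W) (b c : ι → W) (hab : ∀ l, Q.Adj a (b l)) (hac : ∀ l, ¬Q.Adj a (c l))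
    (hbc : ∀ l l', Q.Adj (b l) (c l') ↔ l = l') (hbb : ∀ l l', ¬Q.Adj (b l) (b l'))
    (hcc : ∀ l l', l ≠ l' → Q.Adj (c l) (c l')) : False := by
  have hcc' : ∀ l l', Q.Adj (c l) (c l') ↔ l ≠ l' := fun l l' =>
    ⟨fun h hl => Q.irrefl (hl ▸ h), hcc l l'⟩
  refine hQ.false_of_twinFree (isTwinFree_pentagon hn)
    (f := Sum.elim (fun _ => a) (Sum.elim (b ∘ e.symm) (c ∘ e.symm))) ?_
  rintro (⟨⟩ | i | i) (⟨⟩ | j | j) <;>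
    simp [pentagon, fromRel_adj, hab, hac, hbc, hbb, hcc', Q.adj_comm (c _), Q.adj_comm (b _) a,
      eq_comm]

end InducedCopies

section Adjacency

variable {Q : SimpleGraph W} {S T : Set W}

theorem neighborSet_inter_total (hc4 : IndFree Q (cycleG 4)) (hS : Q.IsClique S)
    (hT : Q.IsClique T) (hST : Disjoint S T) {x y : W} (hx : x ∈ S) (hy : y ∈ S) :
    Q.neighborSet x ∩ T ⊆ Q.neighborSet y ∩ T ∨ Q.neighborSet y ∩ T ⊆ Q.neighborSet x ∩ T := by
  refine or_iff_not_imp_left.2 fun h v ⟨hyv, hv⟩ => ⟨?_, hv⟩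
  obtain ⟨u, ⟨hxu, hu⟩, hyu⟩ := Set.not_subset.1 h
  have hyu : ¬Q.Adj y u := fun h => hyu ⟨h, hu⟩
  by_contra hxv
  refine hc4.false_of_cycle4 x u v y hxu (hT hu hv ?_) (Adj.symm hyv) (hS hy hx ?_) hxv
    (hyu ·.symm) (fun h => Set.disjoint_left.1 hST hx (h ▸ hv))
    (fun h => Set.disjoint_left.1 hST hy (h ▸ hu))
  · rintro rfl; exact hxv hxu
  · rintro rfl; exact hyu hxu

theorem exists_subset_neighborSet [Finite W] (hS : S.Nonempty)
    (hnest : ∀ x ∈ S, ∀ y ∈ S,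
      Q.neighborSet x ∩ T ⊆ Q.neighborSet y ∩ T ∨ Q.neighborSet y ∩ T ⊆ Q.neighborSet x ∩ T)
    (hcover : ∀ z ∈ T, ∃ x ∈ S, Q.Adj x z) : ∃ x ∈ S, T ⊆ Q.neighborSet x := by
  obtain ⟨x, hx, hmax⟩ :=
    Set.exists_max_image S (fun x => (Q.neighborSet x ∩ T).ncard) S.toFinite hS
  refine ⟨x, hx, fun z hz => ?_⟩
  obtain ⟨y, hy, hyz⟩ := hcover z hz
  suffices Q.neighborSet y ∩ T ⊆ Q.neighborSet x ∩ T from (this ⟨hyz, hz⟩).1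
  rcases hnest y hy x hx with h | h
  · exact h
  · exact (Set.eq_of_subset_of_ncard_le h (hmax y hy) (Set.toFinite _)).symm.subset

theorem exists_not_adj_of_not_completeTo {t : ℕ} {A : Set W} {B : Fin t → Set W}
    (hAB : ¬CompleteTo Q A (⋃ i, B i)) : ∃ i, ∃ a ∈ A, ∃ b ∈ B i, ¬Q.Adj a b := by
  simp only [CompleteTo, Set.mem_iUnion, not_forall] at hAB
  obtain ⟨a, ha, b, ⟨i, hb⟩, hab⟩ := hAB
  exact ⟨i, a, ha, b, hb, hab⟩

end Adjacency

namespace IsFramePartition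

variable {Q : SimpleGraph W} {A : Set W}

section

variable {t : ℕ} {B C : Fin t → Set W}

/-- Everything a frame partition says about a pair of vertices from known parts, in the form
consumed by `grind`. -/
theorem rules (hF : IsFramePartition Q A B C) :
    (∀ i, ∀ a ∈ A, ∀ c ∈ C i, ¬Q.Adj a c) ∧
    (∀ i j, i ≠ j → ∀ x ∈ B i, ∀ y ∈ B j, ¬Q.Adj x y) ∧
    (∀ i j, i ≠ j → ∀ x ∈ C i, ∀ y ∈ C j, Q.Adj x y) ∧
    (∀ i j, i ≠ j → ∀ x ∈ B i, ∀ y ∈ C j, ¬Q.Adj x y) ∧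
    (∀ i, ∀ x ∈ A, x ∉ B i) ∧ (∀ i, ∀ x ∈ A, x ∉ C i) ∧
    (∀ i j, i ≠ j → ∀ x ∈ B i, x ∉ B j) ∧ (∀ i j, i ≠ j → ∀ x ∈ C i, x ∉ C j) ∧
    (∀ i j, ∀ x ∈ B i, x ∉ C j) := by
  obtain ⟨hAB, hAC, hBB, hCC, hBC, -, -, -, -, -, nAC, nBB, aCC, nBC, -⟩ := hF
  refine ⟨nAC, nBB, aCC, nBC, fun i x hx hx' => ?_, fun i x hx hx' => ?_,
    fun i j hij x hx hx' => ?_, fun i j hij x hx hx' => ?_, fun i j x hx hx' => ?_⟩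
  exacts [Set.disjoint_left.1 (hAB i) hx hx', Set.disjoint_left.1 (hAC i) hx hx',
    Set.disjoint_left.1 (hBB i j hij) hx hx', Set.disjoint_left.1 (hCC i j hij) hx hx',
    Set.disjoint_left.1 (hBC i j) hx hx']

theorem nonempty_B (hF : IsFramePartition Q A B C) (i : Fin t) : (B i).Nonempty :=
  hF.2.2.2.2.2.2.2.1 i

theorem nonempty_C (hF : IsFramePartition Q A B C) (i : Fin t) : (C i).Nonempty :=
  hF.2.2.2.2.2.2.2.2.1 i

theorem exists_adj_A {i : Fin t} {b : W} (hF : IsFramePartition Q A B C) (hb : b ∈ B i) :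
    ∃ a ∈ A, Q.Adj a b :=
  (hF.2.2.2.2.2.2.2.2.2.2.2.2.2.2.1 i b hb).imp fun _ h => ⟨h.1, h.2.symm⟩

theorem exists_adj_C {i : Fin t} {b : W} (hF : IsFramePartition Q A B C) (hb : b ∈ B i) :
    ∃ c ∈ C i, Q.Adj b c :=
  hF.2.2.2.2.2.2.2.2.2.2.2.2.2.2.2.1 i b hb

theorem exists_adj_B {i : Fin t} {c : W} (hF : IsFramePartition Q A B C) (hc : c ∈ C i) :
    ∃ b ∈ B i, Q.Adj b c :=
  (hF.2.2.2.2.2.2.2.2.2.2.2.2.2.2.2.2 i c hc).imp fun _ h => ⟨h.1, h.2.symm⟩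

theorem exists_adj_B_two {a : W} (hF : IsFramePartition Q A B C) (ha : a ∈ A) :
    ∃ i j, i ≠ j ∧ (∃ b ∈ B i, Q.Adj a b) ∧ (∃ b ∈ B j, Q.Adj a b) :=
  hF.2.2.2.2.2.2.2.2.2.1 a ha

theorem exists_adj_B_of_ne {a : W} (hF : IsFramePartition Q A B C) (ha : a ∈ A) (i : Fin t) :
    ∃ j ≠ i, ∃ b ∈ B j, Q.Adj a b := by
  obtain ⟨j, k, hjk, hj, hk⟩ := hF.exists_adj_B_two ha
  rcases eq_or_ne j i with rfl | hji
  exacts [⟨k, hjk.symm, hk⟩, ⟨j, hji, hj⟩]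

theorem adj_of_not_adj_C (hF : IsFramePartition Q A B C) (ht : 3 ≤ t) (hp3 : IndFree Q twoP3)
    {i j : Fin t} {a b c z : W} (hb : b ∈ B i) (hc : c ∈ C i) (hbc : ¬Q.Adj b c) (ha : a ∈ A)
    (hab : Q.Adj a b) (hji : j ≠ i) (hz : z ∈ B j) : Q.Adj a z := by
  have := hF.rules
  have key : ∀ {j k : Fin t} {y z : W}, j ≠ i → k ≠ i → k ≠ j → y ∈ B j → Q.Adj a y →
      z ∈ B k → Q.Adj a z := by
    intro j k y z hj hk hkj hy hay hz
    by_contra haz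
    obtain ⟨c', hc', hzc'⟩ := hF.exists_adj_C hz
    apply hp3.false_of_twoP3 b a y c c' z <;> grind [adj_comm]
  obtain ⟨j', hj', y, hy, hay⟩ := hF.exists_adj_B_of_ne ha i
  rcases eq_or_ne j j' with rfl | hjj'
  · obtain ⟨k, hki, hkj⟩ := Fin.exists_ne_and_ne_of_two_lt i j (by omega)
    obtain ⟨x, hx⟩ := hF.nonempty_B k
    exact key hki hji (Ne.symm hkj) hx (key hj' hki hkj hy hay hx) hz
  · exact key hj' hji hjj' hy hay hz

section CliqueC

variable {i : Fin t} {b b' c c' : W}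

theorem not_adj_of_private_nbrs (hF : IsFramePartition Q A B C) (ht : 3 ≤ t) (hp3 : IndFree Q twoP3)
    (hc6 : IndFree Q (cycleG 6)) (hT0 : IndFree Q T0) (hb : b ∈ B i) (hb' : b' ∈ B i)
    (hc : c ∈ C i) (hc' : c' ∈ C i) (hcc' : ¬Q.Adj c c') (hbc : Q.Adj b c) (hb'c' : Q.Adj b' c')
    (hbc' : ¬Q.Adj b c') (hb'c : ¬Q.Adj b' c) : ¬Q.Adj b b' := by
  intro hbb'
  have := hF.rules
  obtain ⟨a, ha, hab⟩ := hF.exists_adj_A hb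
  obtain ⟨j, hji, -⟩ := Fin.exists_ne_and_ne_of_two_lt i i (by omega)
  obtain ⟨k, hki, hkj⟩ := Fin.exists_ne_and_ne_of_two_lt i j (by omega)
  obtain ⟨c₂, hc₂⟩ := hF.nonempty_C j
  obtain ⟨b₂, hb₂, hb₂c₂⟩ := hF.exists_adj_B hc₂
  obtain ⟨c₃, hc₃⟩ := hF.nonempty_C k
  obtain ⟨b₃, hb₃, hb₃c₃⟩ := hF.exists_adj_B hc₃
  have hab₂ := hF.adj_of_not_adj_C ht hp3 hb hc' hbc' ha hab hji hb₂
  have hab₃ := hF.adj_of_not_adj_C ht hp3 hb hc' hbc' ha hab hki hb₃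
  by_cases hab' : Q.Adj a b'
  · apply hT0.false_of_T0 c₂ c₃ b₂ b₃ c c' a b b' <;> grind [adj_comm]
  · apply hc6.false_of_cycle6 a b b' c' c₂ b₂ <;> grind [adj_comm]

theorem adj_of_private_nbrs (hF : IsFramePartition Q A B C) (ht : 3 ≤ t) (hp3 : IndFree Q twoP3)
    (hc6 : IndFree Q (cycleG 6)) (hc7 : IndFree Q (cycleG 7)) (hb : b ∈ B i) (hb' : b' ∈ B i)
    (hc : c ∈ C i) (hc' : c' ∈ C i) (hcc' : ¬Q.Adj c c') (hbc : Q.Adj b c) (hb'c' : Q.Adj b' c')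
    (hbc' : ¬Q.Adj b c') (hb'c : ¬Q.Adj b' c) : Q.Adj b b' := by
  by_contra hbb'
  have := hF.rules
  obtain ⟨j, hji, -⟩ := Fin.exists_ne_and_ne_of_two_lt i i (by omega)
  obtain ⟨c₂, hc₂⟩ := hF.nonempty_C j
  obtain ⟨a, ha, hab⟩ := hF.exists_adj_A hb
  obtain ⟨a', ha', ha'b'⟩ := hF.exists_adj_A hb'
  have hab' : ¬Q.Adj a b' := fun h => by
    apply hc6.false_of_cycle6 a b c c₂ c' b' <;> grind [adj_comm]
  have ha'b : ¬Q.Adj a' b := fun h => by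
    apply hc6.false_of_cycle6 a' b' c' c₂ c b <;> grind [adj_comm]
  by_cases haa' : Q.Adj a a'
  · apply hc7.false_of_cycle7 a b c c₂ c' b' a' <;> grind [adj_comm]
  · apply hp3.false_of_twoP3 a b c a' b' c' <;> grind [adj_comm]

end CliqueC

theorem isClique_C (hF : IsFramePartition Q A B C) (ht : 3 ≤ t) (hp3 : IndFree Q twoP3)
    (hc4 : IndFree Q (cycleG 4)) (hc6 : IndFree Q (cycleG 6)) (hc7 : IndFree Q (cycleG 7))
    (hT0 : IndFree Q T0) (i : Fin t) : Q.IsClique (C i) := by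
  intro c hc c' hc' hne
  by_contra hcc'
  have := hF.rules
  obtain ⟨j, hji, -⟩ := Fin.exists_ne_and_ne_of_two_lt i i (by omega)
  obtain ⟨c₂, hc₂⟩ := hF.nonempty_C j
  have hsep : ∀ b ∈ B i, Q.Adj b c → ¬Q.Adj b c' := fun b hb h h' => by
    apply hc4.false_of_cycle4 c b c' c₂ <;> grind [adj_comm]
  obtain ⟨b, hb, hbc⟩ := hF.exists_adj_B hc
  obtain ⟨b', hb', hb'c'⟩ := hF.exists_adj_B hc'
  have hbc' := hsep b hb hbc
  have hb'c : ¬Q.Adj b' c := fun h => hsep b' hb' h hb'c'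
  exact hF.not_adj_of_private_nbrs ht hp3 hc6 hT0 hb hb' hc hc' hcc' hbc hb'c' hbc' hb'c
    (hF.adj_of_private_nbrs ht hp3 hc6 hc7 hb hb' hc hc' hcc' hbc hb'c' hbc' hb'c)

theorem exists_petals (hF : IsFramePartition Q A B C) :
    ∃ bs cs : Fin t → W, (∀ l, bs l ∈ B l) ∧ (∀ l, cs l ∈ C l) ∧ ∀ l, Q.Adj (bs l) (cs l) := by
  have hpetal : ∀ l, ∃ x ∈ B l, ∃ y ∈ C l, Q.Adj x y := fun l => by
    obtain ⟨x, hx⟩ := hF.nonempty_B l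
    obtain ⟨y, hy, hxy⟩ := hF.exists_adj_C hx
    exact ⟨x, hx, y, hy, hxy⟩
  choose bs hbs cs hcs hbcs using hpetal
  exact ⟨bs, cs, hbs, hcs, hbcs⟩

theorem false_of_two_petals (hF : IsFramePartition Q A B C)
    (hpent : IndFree Q (pentagon (t + 1)))
    {i : Fin t} {a b b' c c' : W} (ha : a ∈ A) (hb : b ∈ B i) (hb' : b' ∈ B i) (hc : c ∈ C i)
    (hc' : c' ∈ C i) (hbc : Q.Adj b c) (hb'c' : Q.Adj b' c') (hbc' : ¬Q.Adj b c')
    (hb'c : ¬Q.Adj b' c) (hbb' : ¬Q.Adj b b') (hcc' : Q.Adj c c') (hab : Q.Adj a b)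
    (hab' : Q.Adj a b') (hcomplete : ∀ j ≠ i, ∀ z ∈ B j, Q.Adj a z) : False := by
  have := hF.rules
  obtain ⟨bs, cs, hbs, hcs, hbcs⟩ := hF.exists_petals
  -- class `i` contributes the two petals `(b, c)` and `(b', c')`, every other class one
  let pb : Option (Fin t) → W := fun o => o.elim b' (Function.update bs i b)
  let pc : Option (Fin t) → W := fun o => o.elim c' (Function.update cs i c)
  have hmem : ∀ o, pb o ∈ B (o.getD i) ∧ pc o ∈ C (o.getD i) ∧ Q.Adj (pb o) (pc o) := by
    rintro (_ | l)
    · exact ⟨hb', hc', hb'c'⟩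
    · rcases eq_or_ne l i with rfl | hl
      · simpa [pb, pc] using ⟨hb, hc, hbc⟩
      · simpa [pb, pc, hl] using ⟨hbs l, hcs l, hbcs l⟩
  have hpair : ∀ o o', o ≠ o' →
      ¬Q.Adj (pb o) (pc o') ∧ ¬Q.Adj (pb o) (pb o') ∧ Q.Adj (pc o) (pc o') := by
    intro o o' hne
    have := hmem o
    have := hmem o'
    by_cases hcl : o.getD i = o'.getD i
    · rcases o with _ | l <;> rcases o' with _ | l' <;> simp_all [pb, pc]
      exact ⟨fun h => hbb' h.symm, hcc'.symm⟩
    · grind [adj_comm]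
  refine hpent.false_of_pentagon (by have := i.pos; omega) (finSuccEquiv t).symm a pb pc
    (fun o => ?_) (fun o => by grind) (fun o o' => ?_) (fun o o' => ?_)
    (fun o o' hne => (hpair o o' hne).2.2)
  · rcases o with _ | l
    · exact hab'
    · rcases eq_or_ne l i with rfl | hl
      · simpa [pb] using hab
      · simpa [pb, hl] using hcomplete l hl _ (hbs l)
  · rcases eq_or_ne o o' with rfl | hne
    exacts [iff_of_true (hmem o).2.2 rfl, iff_of_false (hpair o o' hne).1 hne]
  · rcases eq_or_ne o o' with rfl | hne
    exacts [Q.irrefl, (hpair o o' hne).2.1]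

section CliqueB

variable {i : Fin t} {a a' b b' : W}

theorem not_adj_of_not_adj_B (hF : IsFramePartition Q A B C) (ht : 3 ≤ t)
    (hp3 : IndFree Q twoP3) (hc4 : IndFree Q (cycleG 4)) (hc6 : IndFree Q (cycleG 6))
    (hc7 : IndFree Q (cycleG 7)) (hT0 : IndFree Q T0) (hpent : IndFree Q (pentagon (t + 1)))
    (hb : b ∈ B i) (hb' : b' ∈ B i) (hne : b ≠ b') (hbb' : ¬Q.Adj b b') (ha : a ∈ A)
    (hab : Q.Adj a b) : ¬Q.Adj a b' := by
  intro hab'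
  have := hF.rules
  by_cases hcom : ∃ c ∈ C i, Q.Adj b c ∧ Q.Adj b' c
  · obtain ⟨c, hc, hbc, hb'c⟩ := hcom
    apply hc4.false_of_cycle4 a b c b' <;> grind [adj_comm]
  push Not at hcom
  obtain ⟨c, hc, hbc⟩ := hF.exists_adj_C hb
  obtain ⟨c', hc', hb'c'⟩ := hF.exists_adj_C hb'
  have hb'c : ¬Q.Adj b' c := hcom c hc hbc
  have hbc' : ¬Q.Adj b c' := fun h => hcom c' hc' h hb'c'
  have hcc' : Q.Adj c c' :=
    hF.isClique_C ht hp3 hc4 hc6 hc7 hT0 i hc hc' (by rintro rfl; exact hb'c hb'c')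
  exact hF.false_of_two_petals hpent ha hb hb' hc hc' hbc hb'c' hbc' hb'c hbb' hcc' hab hab'
    fun j hj z hz => hF.adj_of_not_adj_C ht hp3 hb hc' hbc' ha hab hj hz

theorem adj_of_adj_A (hF : IsFramePartition Q A B C) (ht : 3 ≤ t) (hp3 : IndFree Q twoP3)
    (hc6 : IndFree Q (cycleG 6)) {j : Fin t} {z : W} (ha : a ∈ A) (ha' : a' ∈ A)
    (haa' : Q.Adj a a') (hb : b ∈ B i) (hab : Q.Adj a b) (ha'b : ¬Q.Adj a' b) (hji : j ≠ i)
    (hz : z ∈ B j) : Q.Adj a z := by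
  by_contra haz
  have := hF.rules
  obtain ⟨c, hc, hbc⟩ := hF.exists_adj_C hb
  obtain ⟨c₂, hc₂, hzc₂⟩ := hF.exists_adj_C hz
  by_cases ha'z : Q.Adj a' z
  · apply hc6.false_of_cycle6 a' a b c c₂ z <;> grind [adj_comm]
  · obtain ⟨k, hki, hkj⟩ := Fin.exists_ne_and_ne_of_two_lt i j (by omega)
    obtain ⟨c₃, hc₃⟩ := hF.nonempty_C k
    apply hp3.false_of_twoP3 b a a' c₃ c₂ z <;> grind [adj_comm]

theorem false_of_common_C_nbr_of_adj (hF : IsFramePartition Q A B C) (ht : 3 ≤ t)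
    (hp3 : IndFree Q twoP3) (hc6 : IndFree Q (cycleG 6)) (hT0 : IndFree Q T0) {c : W}
    (hb : b ∈ B i) (hb' : b' ∈ B i) (hc : c ∈ C i) (hbc : Q.Adj b c) (hb'c : Q.Adj b' c)
    (hbb' : ¬Q.Adj b b') (ha : a ∈ A) (ha' : a' ∈ A) (hab : Q.Adj a b) (ha'b' : Q.Adj a' b')
    (hab' : ¬Q.Adj a b') (ha'b : ¬Q.Adj a' b) (haa' : Q.Adj a a') : False := by
  have := hF.rules
  obtain ⟨j, hji, -⟩ := Fin.exists_ne_and_ne_of_two_lt i i (by omega)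
  obtain ⟨k, hki, hkj⟩ := Fin.exists_ne_and_ne_of_two_lt i j (by omega)
  obtain ⟨b₂, hb₂⟩ := hF.nonempty_B j
  obtain ⟨c₂, hc₂, hb₂c₂⟩ := hF.exists_adj_C hb₂
  obtain ⟨b₃, hb₃⟩ := hF.nonempty_B k
  obtain ⟨c₃, hc₃, hb₃c₃⟩ := hF.exists_adj_C hb₃
  have := hF.adj_of_adj_A ht hp3 hc6 ha ha' haa' hb hab ha'b hji hb₂
  have := hF.adj_of_adj_A ht hp3 hc6 ha ha' haa' hb hab ha'b hki hb₃
  have := hF.adj_of_adj_A ht hp3 hc6 ha' ha haa'.symm hb' ha'b' hab' hji hb₂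
  have := hF.adj_of_adj_A ht hp3 hc6 ha' ha haa'.symm hb' ha'b' hab' hki hb₃
  apply hT0.false_of_T0 a a' b b' b₂ b₃ c c₂ c₃ <;> grind [adj_comm]

theorem false_of_common_C_nbr_of_not_adj (hF : IsFramePartition Q A B C)
    (hp3 : IndFree Q twoP3) (hc6 : IndFree Q (cycleG 6)) (hc7 : IndFree Q (cycleG 7)) {c : W}
    (hb : b ∈ B i) (hb' : b' ∈ B i) (hc : c ∈ C i) (hbc : Q.Adj b c) (hb'c : Q.Adj b' c)
    (hbb' : ¬Q.Adj b b') (ha : a ∈ A) (ha' : a' ∈ A) (hab : Q.Adj a b) (ha'b' : Q.Adj a' b')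
    (hab' : ¬Q.Adj a b') (ha'b : ¬Q.Adj a' b) (haa' : ¬Q.Adj a a') : False := by
  have := hF.rules
  obtain ⟨l, hl, x, hx, hax⟩ := hF.exists_adj_B_of_ne ha i
  obtain ⟨m, hm, y, hy, ha'y⟩ := hF.exists_adj_B_of_ne ha' i
  by_cases hxa' : Q.Adj x a'
  · apply hc6.false_of_cycle6 x a b c b' a' <;> grind [adj_comm]
  by_cases hay : Q.Adj a y
  · apply hc6.false_of_cycle6 a y a' b' c b <;> grind [adj_comm]
  by_cases hxy : Q.Adj x y
  · apply hc7.false_of_cycle7 b a x y a' b' c <;> grind [adj_comm]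
  · apply hp3.false_of_twoP3 x a b y a' b' <;> grind [adj_comm]

theorem false_of_no_common_C_nbr (hF : IsFramePartition Q A B C)
    (hp3 : IndFree Q twoP3) (hc6 : IndFree Q (cycleG 6)) (hc7 : IndFree Q (cycleG 7)) {c c' : W}
    (hb : b ∈ B i) (hb' : b' ∈ B i) (hc : c ∈ C i) (hc' : c' ∈ C i) (hbc : Q.Adj b c)
    (hb'c' : Q.Adj b' c') (hbc' : ¬Q.Adj b c') (hb'c : ¬Q.Adj b' c) (hcc' : Q.Adj c c')
    (hbb' : ¬Q.Adj b b') (ha : a ∈ A) (ha' : a' ∈ A) (hab : Q.Adj a b) (ha'b' : Q.Adj a' b')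
    (hab' : ¬Q.Adj a b') (ha'b : ¬Q.Adj a' b) : False := by
  have := hF.rules
  by_cases haa' : Q.Adj a a'
  · apply hc6.false_of_cycle6 a b c c' b' a' <;> grind [adj_comm]
  obtain ⟨l, hl, x, hx, hax⟩ := hF.exists_adj_B_of_ne ha i
  by_cases hxa' : Q.Adj x a'
  · apply hc7.false_of_cycle7 x a b c c' b' a' <;> grind [adj_comm]
  · apply hp3.false_of_twoP3 x a b a' b' c' <;> grind [adj_comm]

end CliqueB

theorem isClique_B (hF : IsFramePartition Q A B C) (ht : 3 ≤ t) (hp3 : IndFree Q twoP3)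
    (hc4 : IndFree Q (cycleG 4)) (hc6 : IndFree Q (cycleG 6)) (hc7 : IndFree Q (cycleG 7))
    (hT0 : IndFree Q T0) (hpent : IndFree Q (pentagon (t + 1))) (i : Fin t) :
    Q.IsClique (B i) := by
  intro b hb b' hb' hne
  by_contra hbb'
  obtain ⟨a, ha, hab⟩ := hF.exists_adj_A hb
  obtain ⟨a', ha', ha'b'⟩ := hF.exists_adj_A hb'
  have hab' := hF.not_adj_of_not_adj_B ht hp3 hc4 hc6 hc7 hT0 hpent hb hb' hne hbb' ha hab
  have ha'b := hF.not_adj_of_not_adj_B ht hp3 hc4 hc6 hc7 hT0 hpent hb' hb hne.symm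
    (fun h => hbb' h.symm) ha' ha'b'
  by_cases hcom : ∃ c ∈ C i, Q.Adj b c ∧ Q.Adj b' c
  · obtain ⟨c, hc, hbc, hb'c⟩ := hcom
    by_cases haa' : Q.Adj a a'
    · exact hF.false_of_common_C_nbr_of_adj ht hp3 hc6 hT0 hb hb' hc hbc hb'c hbb' ha ha' hab
        ha'b' hab' ha'b haa'
    · exact hF.false_of_common_C_nbr_of_not_adj hp3 hc6 hc7 hb hb' hc hbc hb'c hbb' ha ha' hab
        ha'b' hab' ha'b haa'
  push Not at hcom
  obtain ⟨c, hc, hbc⟩ := hF.exists_adj_C hb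
  obtain ⟨c', hc', hb'c'⟩ := hF.exists_adj_C hb'
  have hb'c : ¬Q.Adj b' c := hcom c hc hbc
  have hbc' : ¬Q.Adj b c' := fun h => hcom c' hc' h hb'c'
  have hcc' : Q.Adj c c' :=
    hF.isClique_C ht hp3 hc4 hc6 hc7 hT0 i hc hc' (by rintro rfl; exact hb'c hb'c')
  exact hF.false_of_no_common_C_nbr hp3 hc6 hc7 hb hb' hc hc' hbc hb'c' hbc' hb'c hcc' hbb' ha ha'
    hab ha'b' hab' ha'b

theorem adj_of_adj_of_not_adj (hF : IsFramePartition Q A B C) (ht : 3 ≤ t)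
    (hp3 : IndFree Q twoP3) {p m : Fin t} {a x x' z : W} (ha : a ∈ A) (hx : x ∈ B p)
    (hx' : x' ∈ B p) (hxx' : Q.Adj x x') (hax : Q.Adj a x) (hax' : ¬Q.Adj a x') (hmp : m ≠ p)
    (hz : z ∈ B m) : Q.Adj a z := by
  by_contra haz
  have := hF.rules
  obtain ⟨k, hkp, hkm⟩ := Fin.exists_ne_and_ne_of_two_lt p m (by omega)
  obtain ⟨c, hc, hzc⟩ := hF.exists_adj_C hz
  obtain ⟨c', hc'⟩ := hF.nonempty_C k
  apply hp3.false_of_twoP3 a x x' z c c' <;> grind [adj_comm]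

theorem eq_three_of_not_completeTo (hF : IsFramePartition Q A B C) (ht : 3 ≤ t)
    (hp3 : IndFree Q twoP3) (hAB : ¬CompleteTo Q A (⋃ i, B i)) : t = 3 := by
  by_contra ht3
  have := hF.rules
  have key : ∀ {m p q : Fin t} {a b x y : W}, p ≠ q → m ≠ p → m ≠ q → a ∈ A → b ∈ B m →
      x ∈ B p → y ∈ B q → Q.Adj a x → Q.Adj a y → Q.Adj a b := by
    intro m p q a b x y hpq hmp hmq ha hb hx hy hax hay
    by_contra hab
    obtain ⟨l, hlm, hlp, hlq⟩ := exists_ne_ne_ne_of_three_lt (by omega) m p q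
    obtain ⟨c, hc, hbc⟩ := hF.exists_adj_C hb
    obtain ⟨c', hc'⟩ := hF.nonempty_C l
    apply hp3.false_of_twoP3 x a y b c c' <;> grind [adj_comm]
  obtain ⟨m, a, ha, b, hb, hab⟩ := exists_not_adj_of_not_completeTo hAB
  obtain ⟨q, hqm, y, hy, hay⟩ := hF.exists_adj_B_of_ne ha m
  obtain ⟨p, hpq, x, hx, hax⟩ := hF.exists_adj_B_of_ne ha q
  rcases eq_or_ne m p with rfl | hmp
  · obtain ⟨k, hkm, hkq⟩ := Fin.exists_ne_and_ne_of_two_lt m q (by omega)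
    obtain ⟨z, hz⟩ := hF.nonempty_B k
    by_cases haz : Q.Adj a z
    · exact hab (key hkq hkm.symm hqm.symm ha hb hz hy haz hay)
    · exact haz (key hpq hkm hkq ha hz hx hy hax hay)
  · exact hab (key hpq hmp hqm.symm ha hb hx hy hax hay)

theorem isClique_A_of_completeTo (hF : IsFramePartition Q A B C) (hc4 : IndFree Q (cycleG 4))
    {j k : Fin t} (hjk : j ≠ k) (hj : CompleteTo Q A (B j)) (hk : CompleteTo Q A (B k)) :
    Q.IsClique A := by
  intro a ha a' ha' hne
  by_contra haa'
  have := hF.rules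
  obtain ⟨x, hx⟩ := hF.nonempty_B j
  obtain ⟨y, hy⟩ := hF.nonempty_B k
  have := hj a ha x hx
  have := hj a' ha' x hx
  have := hk a ha y hy
  have := hk a' ha' y hy
  apply hc4.false_of_cycle4 a x a' y <;> grind [adj_comm]

theorem isClique_A_of_completeTo_iUnion (hF : IsFramePartition Q A B C) (ht : 2 ≤ t)
    (hc4 : IndFree Q (cycleG 4)) (hAB : CompleteTo Q A (⋃ i, B i)) : Q.IsClique A :=
  have hAB' : ∀ i, CompleteTo Q A (B i) := fun i a ha b hb =>
    hAB a ha b (Set.mem_iUnion_of_mem i hb)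
  hF.isClique_A_of_completeTo hc4 (j := ⟨0, by omega⟩) (k := ⟨1, by omega⟩) (by simp)
    (hAB' _) (hAB' _)

theorem isVillaPartition [Finite W] (hF : IsFramePartition Q A B C)
    (hc4 : IndFree Q (cycleG 4)) (hA : Q.IsClique A) (hB : ∀ i, Q.IsClique (B i))
    (hC : ∀ i, Q.IsClique (C i)) (hAB : CompleteTo Q A (⋃ i, B i)) :
    IsVillaPartition Q A B C := by
  obtain ⟨hAB', hAC', hBB', hCC', hBC', hU, hAne, hBne, hCne, -, nAC, nBB, aCC, nBC, -, hBC,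
    hCB⟩ := hF
  have hnest : ∀ i, ∀ b ∈ B i, ∀ b' ∈ B i, Q.neighborSet b ∩ C i ⊆ Q.neighborSet b' ∩ C i ∨
      Q.neighborSet b' ∩ C i ⊆ Q.neighborSet b ∩ C i := fun i b hb b' hb' =>
    neighborSet_inter_total hc4 (hB i) (hC i) (hBC' i i) hb hb'
  refine ⟨⟨hAB', hAC', hBB', hCC', hBC', hA, hB, hC, hAne, hBne, hCne,
    fun i a ha b hb => hAB a ha b (Set.mem_iUnion_of_mem i hb), nAC, nBB, aCC, nBC, hnest,
    fun i b hb => ?_, fun i => ?_⟩, hU⟩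
  · obtain ⟨c, hc, hbc⟩ := hBC i b hb
    exact ⟨c, hbc, hc⟩
  · exact exists_subset_neighborSet (hBne i) (hnest i) fun c hc =>
      (hCB i c hc).imp fun b hb => ⟨hb.1, hb.2.symm⟩

end

section

variable {B C : Fin 3 → Set W}

theorem adj_of_not_adj_of_three (hF : IsFramePartition Q A B C) (hp3 : IndFree Q twoP3)
    (hB : ∀ i, Q.IsClique (B i)) {i j : Fin 3} {a b z : W} (ha : a ∈ A) (hb : b ∈ B i)
    (hab : ¬Q.Adj a b) (hji : j ≠ i) (hz : z ∈ B j) : Q.Adj a z := by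
  by_contra haz
  obtain ⟨p, q, hpq, ⟨x, hx, hax⟩, ⟨y, hy, hay⟩⟩ := hF.exists_adj_B_two ha
  have hmixed : ∀ {k : Fin 3} {w : W}, k = i ∨ k = j → w ∈ B k → Q.Adj a w → False := by
    rintro k w (rfl | rfl) hw haw
    · exact haz (hF.adj_of_adj_of_not_adj le_rfl hp3 ha hw hb
        (hB k hw hb (by rintro rfl; exact hab haw)) haw hab hji hz)
    · exact hab (hF.adj_of_adj_of_not_adj le_rfl hp3 ha hw hz
        (hB k hw hz (by rintro rfl; exact haz haw)) haw haz hji.symm hb)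
  have : ∀ p q i j : Fin 3, p ≠ q → j ≠ i → (p = i ∨ p = j) ∨ (q = i ∨ q = j) := by decide
  rcases this p q i j hpq hji with h | h
  exacts [hmixed h hx hax, hmixed h hy hay]

theorem completeTo_B_of_ne (hF : IsFramePartition Q A B C) (hp3 : IndFree Q twoP3)
    (hc6 : IndFree Q (cycleG 6)) (hc7 : IndFree Q (cycleG 7)) (hB : ∀ i, Q.IsClique (B i))
    {i₀ j : Fin 3} {a₀ b₀ : W} (ha₀ : a₀ ∈ A) (hb₀ : b₀ ∈ B i₀) (hn₀ : ¬Q.Adj a₀ b₀)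
    (hj : j ≠ i₀) : CompleteTo Q A (B j) := by
  intro a ha z hz
  by_contra haz
  have := hF.rules
  obtain ⟨c₁, hc₁, hb₀c₁⟩ := hF.exists_adj_C hb₀
  obtain ⟨c₂, hc₂, hzc₂⟩ := hF.exists_adj_C hz
  have := hF.adj_of_not_adj_of_three hp3 hB ha₀ hb₀ hn₀ hj hz
  have := hF.adj_of_not_adj_of_three hp3 hB ha hz haz hj.symm hb₀
  by_cases ha₀a : Q.Adj a₀ a
  · apply hc6.false_of_cycle6 a a₀ z c₂ c₁ b₀ <;> grind [adj_comm]
  obtain ⟨k, hki, hkj⟩ := Fin.exists_ne_and_ne_of_two_lt i₀ j (by omega)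
  obtain ⟨y, hy⟩ := hF.nonempty_B k
  have := hF.adj_of_not_adj_of_three hp3 hB ha₀ hb₀ hn₀ hki hy
  have := hF.adj_of_not_adj_of_three hp3 hB ha hz haz hkj hy
  apply hc7.false_of_cycle7 a₀ y a b₀ c₁ c₂ z <;> grind [adj_comm]

theorem isClique_A_of_not_completeTo (hF : IsFramePartition Q A B C) (hp3 : IndFree Q twoP3)
    (hc4 : IndFree Q (cycleG 4)) (hc6 : IndFree Q (cycleG 6)) (hc7 : IndFree Q (cycleG 7))
    (hB : ∀ i, Q.IsClique (B i)) (hAB : ¬CompleteTo Q A (⋃ i, B i)) : Q.IsClique A := by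
  obtain ⟨i₀, a₀, ha₀, b₀, hb₀, hn₀⟩ := exists_not_adj_of_not_completeTo hAB
  obtain ⟨j, hji, -⟩ := Fin.exists_ne_and_ne_of_two_lt i₀ i₀ (by omega)
  obtain ⟨k, hki, hkj⟩ := Fin.exists_ne_and_ne_of_two_lt i₀ j (by omega)
  exact hF.isClique_A_of_completeTo hc4 hkj.symm
    (hF.completeTo_B_of_ne hp3 hc6 hc7 hB ha₀ hb₀ hn₀ hji)
    (hF.completeTo_B_of_ne hp3 hc6 hc7 hB ha₀ hb₀ hn₀ hki)

theorem adj_C_of_not_adj_A (hF : IsFramePartition Q A B C) (hp3 : IndFree Q twoP3)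
    (hB : ∀ i, Q.IsClique (B i)) (hC : ∀ i, Q.IsClique (C i)) {i : Fin 3} {a b c' : W}
    (ha : a ∈ A) (hb : b ∈ B i) (hab : ¬Q.Adj a b) (hc' : c' ∈ C i) : Q.Adj b c' := by
  by_contra hbc'
  have := hF.rules
  obtain ⟨j, hji, -⟩ := Fin.exists_ne_and_ne_of_two_lt i i (by omega)
  obtain ⟨k, hki, hkj⟩ := Fin.exists_ne_and_ne_of_two_lt i j (by omega)
  obtain ⟨x, hx⟩ := hF.nonempty_B j
  obtain ⟨y, hy⟩ := hF.nonempty_B k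
  obtain ⟨c, hc, hbc⟩ := hF.exists_adj_C hb
  have := hF.adj_of_not_adj_of_three hp3 hB ha hb hab hji hx
  have := hF.adj_of_not_adj_of_three hp3 hB ha hb hab hki hy
  have := hC i hc hc' (by rintro rfl; exact hbc' hbc)
  apply hp3.false_of_twoP3 x a y b c c' <;> grind [adj_comm]

theorem completeTo_B_C (hF : IsFramePartition Q A B C) (hp3 : IndFree Q twoP3)
    (hc6 : IndFree Q (cycleG 6)) (hc7 : IndFree Q (cycleG 7)) (hB : ∀ i, Q.IsClique (B i))
    (hC : ∀ i, Q.IsClique (C i)) (hAB : ¬CompleteTo Q A (⋃ i, B i)) (i : Fin 3) :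
    CompleteTo Q (B i) (C i) := by
  obtain ⟨i₀, a₀, ha₀, b₀, hb₀, hn₀⟩ := exists_not_adj_of_not_completeTo hAB
  intro b hb c hc
  by_contra hbc
  rcases eq_or_ne i₀ i with rfl | hi
  · by_cases hex : ∃ a ∈ A, ¬Q.Adj a b
    · obtain ⟨a, ha, hab⟩ := hex
      exact hbc (hF.adj_C_of_not_adj_A hp3 hB hC ha hb hab hc)
    push Not at hex
    have := hF.rules
    have := hex a₀ ha₀
    have hb₀c := hF.adj_C_of_not_adj_A hp3 hB hC ha₀ hb₀ hn₀ hc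
    have := hB i₀ hb hb₀ (by rintro rfl; exact hbc hb₀c)
    obtain ⟨j, hji, -⟩ := Fin.exists_ne_and_ne_of_two_lt i₀ i₀ (by omega)
    obtain ⟨y, hy⟩ := hF.nonempty_B j
    obtain ⟨c', hc', hyc'⟩ := hF.exists_adj_C hy
    have := hF.adj_of_not_adj_of_three hp3 hB ha₀ hb₀ hn₀ hji hy
    apply hc6.false_of_cycle6 a₀ b b₀ c c' y <;> grind [adj_comm]
  · exact hn₀ (hF.adj_of_not_adj_C le_rfl hp3 hb hc hbc ha₀
      (hF.completeTo_B_of_ne hp3 hc6 hc7 hB ha₀ hb₀ hn₀ hi.symm a₀ ha₀ b hb) hi hb₀)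

theorem isFiveBasketPartition [Finite W] (hF : IsFramePartition Q A B C)
    (hp3 : IndFree Q twoP3) (hc4 : IndFree Q (cycleG 4)) (hc6 : IndFree Q (cycleG 6))
    (hc7 : IndFree Q (cycleG 7)) (hA : Q.IsClique A) (hB : ∀ i, Q.IsClique (B i))
    (hC : ∀ i, Q.IsClique (C i)) (hBC : ∀ i, CompleteTo Q (B i) (C i))
    (hAB : ¬CompleteTo Q A (⋃ i, B i)) : IsFiveBasketPartition Q A B C ∅ := by
  obtain ⟨i₀, a₀, ha₀, b₀, hb₀, hn₀⟩ := exists_not_adj_of_not_completeTo hAB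
  have hcomplete := fun j (hj : j ≠ i₀) => hF.completeTo_B_of_ne hp3 hc6 hc7 hB ha₀ hb₀ hn₀ hj
  have hnest := fun a (ha : a ∈ A) a' (ha' : a' ∈ A) =>
    neighborSet_inter_total hc4 hA (hB i₀) (hF.1 i₀) ha ha'
  obtain ⟨hAB', hAC', hBB', hCC', hBC', hU, hAne, hBne, hCne, -, nAC, nBB, aCC, nBC, hBA, -⟩ := hF
  refine ⟨hAB', hAC', Set.disjoint_empty _, hBB', hCC', hBC', fun _ => Set.disjoint_empty _,
    fun _ => Set.disjoint_empty _, by rwa [Set.union_empty], hA, hB, hC, isClique_empty, hAne,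
    hBne, hCne, nBB, aCC, nAC, hBC, nBC, ⟨i₀, hcomplete, hnest, ?_⟩, ⟨0, ?_, ?_⟩⟩
  · exact exists_subset_neighborSet hAne hnest fun b hb =>
      (hBA i₀ b hb).imp fun a ha => ⟨ha.1, ha.2.symm⟩
  · simp [CompleteTo]
  · simp [AnticompleteTo]

end

end IsFramePartition

theorem statement_6 {W : Type} [Fintype W] (t : ℕ) (ht : 3 ≤ t) (Q : SimpleGraph W)
    (A : Set W) (B C : Fin t → Set W) (hframe : IsFramePartition Q A B C)
    (hfree : IndFree Q twoP3 ∧ IndFree Q (cycleG 4) ∧ IndFree Q (cycleG 6) ∧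
      IndFree Q (cycleG 7) ∧ IndFree Q T0 ∧ IndFree Q (pentagon (t + 1))) :
    (Q.IsClique A ∧ (∀ i, Q.IsClique (B i)) ∧ (∀ i, Q.IsClique (C i))) ∧
    (CompleteTo Q A (⋃ i, B i) → IsVillaPartition Q A B C) ∧
    (¬ CompleteTo Q A (⋃ i, B i) →
      ∃ ht3 : t = 3,
        (∀ i, CompleteTo Q (B i) (C i)) ∧
        IsFiveBasketPartition Q A (fun i => B (Fin.cast ht3.symm i))
          (fun i => C (Fin.cast ht3.symm i)) ∅) := by
  obtain ⟨hp3, hc4, hc6, hc7, hT0, hpent⟩ := hfree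
  have hB := hframe.isClique_B ht hp3 hc4 hc6 hc7 hT0 hpent
  have hC := hframe.isClique_C ht hp3 hc4 hc6 hc7 hT0
  by_cases hAB : CompleteTo Q A (⋃ i, B i)
  · have hA := hframe.isClique_A_of_completeTo_iUnion (by omega) hc4 hAB
    exact ⟨⟨hA, hB, hC⟩, fun _ => hframe.isVillaPartition hc4 hA hB hC hAB, (absurd hAB ·)⟩
  obtain rfl := hframe.eq_three_of_not_completeTo ht hp3 hAB
  have hA := hframe.isClique_A_of_not_completeTo hp3 hc4 hc6 hc7 hB hAB
  have hBC := hframe.completeTo_B_C hp3 hc6 hc7 hB hC hAB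
  exact ⟨⟨hA, hB, hC⟩, (absurd · hAB),
    fun _ => ⟨rfl, hBC, hframe.isFiveBasketPartition hp3 hc4 hc6 hc7 hA hB hC hBC hAB⟩⟩

end Paper
end

section
/- Let t ≥ 3 be an integer. Every t-villa is (2P_3, C_4, C_6, C_7, T_0)-free and contains an induced t-pentagon. Moreover, every t-villa is anticonnected and contains no simplicial and no universal vertices. -/
namespace Paper

open SimpleGraph

variable {V : Type} {W : Type}

/-!
The non-neighbours of a vertex of `A` form the clique `C₁ ∪ … ∪ Cₜ`, and `B₁ ∪ … ∪ Bₜ` induces a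
disjoint union of cliques whose neighbourhoods in the `Cᵢ` are nested. So an induced copy of `2P₃`,
`C₄`, `C₆`, `C₇` or `T₀` would avoid `A` and split into a clique and a `P₃`-free part with nested
attachments, which a finite check rules out for each of these five graphs. A vertex of `A`, a
vertex of each `Bᵢ` complete to `Cᵢ` and a vertex of each `Cᵢ` induce a `t`-pentagon. In the
complement every vertex reaches a fixed vertex of `A` through `C₁ ∪ … ∪ Cₜ`, and since `t ≥ 2`
every vertex has two nonadjacent neighbours.
-/

open SimpleGraph

instance cycleG.decAdj (n : ℕ) : DecidableRel (cycleG n).Adj := fun u v =>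
  decidable_of_iff' _ (fromRel_adj _ u v)

instance T0.decAdj : DecidableRel T0.Adj := fun u v =>
  decidable_of_iff' _ (fromRel_adj _ u v)

instance twoP3.decAdj : DecidableRel twoP3.Adj
  | .inl a, .inl b => decidable_of_iff' (a.val + 1 = b.val ∨ b.val + 1 = a.val)
      (by simp only [twoP3, fromRel_adj, pathGraph_adj, ne_eq, Sum.inl.injEq]; omega)
  | .inr a, .inr b => decidable_of_iff' (a.val + 1 = b.val ∨ b.val + 1 = a.val)
      (by simp only [twoP3, fromRel_adj, pathGraph_adj, ne_eq, Sum.inr.injEq]; omega)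
  | .inl _, .inr _ => isFalse (by simp [twoP3])
  | .inr _, .inl _ => isFalse (by simp [twoP3])

def villaPart {t : ℕ} (A : Set W) (B C : Fin t → Set W) : Unit ⊕ Fin t ⊕ Fin t → Set W :=
  Sum.elim (fun _ => A) (Sum.elim B C)

/-- For an induced subgraph `H` of a villa avoiding `A`, `K` marks the vertices in `C₁ ∪ … ∪ Cₜ`
and the others lie in `B₁ ∪ … ∪ Bₜ`. The last clause says that adjacent vertices outside `K`
have nested neighbourhoods in `K`. -/
def VillaSplit (H : SimpleGraph V) (K : V → Bool) : Prop :=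
  (∀ x y, K x → K y → x ≠ y → H.Adj x y) ∧
  (∀ x y z, !K x → !K y → !K z → H.Adj x y → H.Adj y z → x ≠ z → H.Adj x z) ∧
  (∀ x y z w, !K x → !K y → K z → K w → H.Adj x y → H.Adj x z → H.Adj y w →
    H.Adj x w ∨ H.Adj y z)

/-- An induced copy of `H` in a villa has no vertex `u` in `A`, because the non-neighbours of `u`
would lie in the clique `C₁ ∪ … ∪ Cₜ` and the common neighbours of `u` and a non-neighbour in `Cᵢ`
in the clique `Bᵢ`; the copy would then carry a `VillaSplit`. -/
def IsVillaObstruction (H : SimpleGraph V) : Prop :=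
  (∀ u, (∃ p q, p ≠ u ∧ q ≠ u ∧ p ≠ q ∧ ¬H.Adj u p ∧ ¬H.Adj u q ∧ ¬H.Adj p q) ∨
    ∃ w p q, w ≠ u ∧ ¬H.Adj u w ∧ p ≠ q ∧ ¬H.Adj p q ∧
      H.Adj u p ∧ H.Adj u q ∧ H.Adj w p ∧ H.Adj w q) ∧
  ∀ K, ¬VillaSplit H K

instance [Fintype V] [DecidableEq V] (H : SimpleGraph V) [DecidableRel H.Adj] (K : V → Bool) :
    Decidable (VillaSplit H K) := by
  unfold VillaSplit
  exact @instDecidableAnd _ _ inferInstance (@instDecidableAnd _ _ inferInstance inferInstance)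

instance [Fintype V] [DecidableEq V] (H : SimpleGraph V) [DecidableRel H.Adj] :
    Decidable (IsVillaObstruction H) := by
  unfold IsVillaObstruction
  infer_instance

theorem twoP3_isVillaObstruction : IsVillaObstruction twoP3 := by decide

theorem cycleG_four_isVillaObstruction : IsVillaObstruction (cycleG 4) := by decide

theorem cycleG_six_isVillaObstruction : IsVillaObstruction (cycleG 6) := by decide

set_option maxRecDepth 10000 in
theorem cycleG_seven_isVillaObstruction : IsVillaObstruction (cycleG 7) := by decide

set_option maxRecDepth 10000 in
theorem T0_isVillaObstruction : IsVillaObstruction T0 := by decide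

theorem not_isSimplicial_of_adj {G : SimpleGraph V} {v x y : V} (hx : G.Adj v x)
    (hy : G.Adj v y) (hxy : x ≠ y) (hnxy : ¬G.Adj x y) : ¬IsSimplicial G v :=
  fun hv => hnxy (hv hx hy hxy)

theorem not_isUniversal_of_connected_compl [Nontrivial V] {G : SimpleGraph V}
    (hG : Gᶜ.Connected) (v : V) : ¬IsUniversal G v := by
  obtain ⟨w, hw⟩ := hG.preconnected.exists_adj_of_nontrivial v
  exact fun hv => ((compl_adj G v w).1 hw).2 (hv w ((compl_adj G v w).1 hw).1.symm)

namespace VillaCore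

variable {t : ℕ} {Q : SimpleGraph W} {A : Set W} {B C : Fin t → Set W}

theorem pairwise_disjoint_villaPart (h : VillaCore Q A B C) :
    Pairwise fun x y => Disjoint (villaPart A B C x) (villaPart A B C y) := by
  obtain ⟨hAB, hAC, hBB, hCC, hBC, -⟩ := h
  rintro (_ | i | i) (_ | j | j) hij <;>
    simp only [villaPart, Sum.elim_inl, Sum.elim_inr]
  all_goals first
    | exact absurd rfl hij
    | exact hAB _ | exact (hAB _).symm | exact hAC _ | exact (hAC _).symm
    | exact hBC _ _ | exact (hBC _ _).symm
    | exact hBB _ _ (by simpa using hij) | exact hCC _ _ (by simpa using hij)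

theorem adj_of_mem_A_of_mem_B (h : VillaCore Q A B C) {a b : W} {i : Fin t} (ha : a ∈ A)
    (hb : b ∈ B i) : Q.Adj a b := by
  obtain ⟨-, -, -, -, -, -, -, -, -, -, -, hAB, -⟩ := h
  exact hAB i a ha b hb

theorem not_adj_of_mem_A_of_mem_C (h : VillaCore Q A B C) {a c : W} {i : Fin t} (ha : a ∈ A)
    (hc : c ∈ C i) : ¬Q.Adj a c := by
  obtain ⟨-, -, -, -, -, -, -, -, -, -, -, -, hAC, -⟩ := h
  exact hAC i a ha c hc

theorem compl_adj_of_mem_A_of_mem_C (h : VillaCore Q A B C) {a c : W} {i : Fin t} (ha : a ∈ A)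
    (hc : c ∈ C i) : Qᶜ.Adj a c := by
  obtain ⟨-, hdAC, -⟩ := id h
  exact (compl_adj Q a c).2 ⟨(hdAC i).ne_of_mem ha hc, h.not_adj_of_mem_A_of_mem_C ha hc⟩

theorem compl_adj_of_mem_B_of_mem_C (h : VillaCore Q A B C) {b c : W} {i j : Fin t}
    (hij : i ≠ j) (hb : b ∈ B i) (hc : c ∈ C j) : Qᶜ.Adj b c := by
  obtain ⟨-, -, -, -, hdBC, -, -, -, -, -, -, -, -, -, -, hBC, -⟩ := h
  exact (compl_adj Q b c).2 ⟨(hdBC i j).ne_of_mem hb hc, hBC i j hij b hb c hc⟩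

theorem adj_of_mem_A (h : VillaCore Q A B C) {a a' : W} (ha : a ∈ A) (ha' : a' ∈ A)
    (haa' : a ≠ a') : Q.Adj a a' := by
  obtain ⟨-, -, -, -, -, hA, -⟩ := h
  exact hA ha ha' haa'

theorem adj_of_mem_B (h : VillaCore Q A B C) {x y : W} {i : Fin t} (hx : x ∈ B i) (hy : y ∈ B i)
    (hxy : x ≠ y) : Q.Adj x y := by
  obtain ⟨-, -, -, -, -, -, hB, -⟩ := h
  exact hB i hx hy hxy

theorem adj_of_mem_C (h : VillaCore Q A B C) {u v : W} {i j : Fin t} (hu : u ∈ C i)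
    (hv : v ∈ C j) (huv : u ≠ v) : Q.Adj u v := by
  obtain ⟨-, -, -, -, -, -, -, hC, -, -, -, -, -, -, hCC, -⟩ := h
  rcases eq_or_ne i j with rfl | hij
  exacts [hC i hu hv huv, hCC i j hij u hu v hv]

theorem eq_of_adj_of_mem_B_of_mem_B (h : VillaCore Q A B C) {x y : W} {i j : Fin t}
    (hx : x ∈ B i) (hy : y ∈ B j) (hxy : Q.Adj x y) : i = j := by
  obtain ⟨-, -, -, -, -, -, -, -, -, -, -, -, -, hBB, -⟩ := h
  by_contra hij
  exact hBB i j hij x hx y hy hxy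

theorem eq_of_adj_of_mem_B_of_mem_C (h : VillaCore Q A B C) {x y : W} {i j : Fin t}
    (hx : x ∈ B i) (hy : y ∈ C j) (hxy : Q.Adj x y) : i = j := by
  obtain ⟨-, -, -, -, -, -, -, -, -, -, -, -, -, -, -, hBC, -⟩ := h
  by_contra hij
  exact hBC i j hij x hx y hy hxy

theorem adj_of_adj_of_adj_of_mem_B (h : VillaCore Q A B C) {x y z : W} {i j k : Fin t}
    (hx : x ∈ B i) (hy : y ∈ B j) (hz : z ∈ B k) (hxy : Q.Adj x y) (hyz : Q.Adj y z)
    (hxz : x ≠ z) : Q.Adj x z := by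
  obtain rfl := h.eq_of_adj_of_mem_B_of_mem_B hx hy hxy
  obtain rfl := h.eq_of_adj_of_mem_B_of_mem_B hy hz hyz
  exact h.adj_of_mem_B hx hz hxz

theorem adj_or_adj_of_adj_of_mem_B (h : VillaCore Q A B C) {x y z w : W} {i j k l : Fin t}
    (hx : x ∈ B i) (hy : y ∈ B j) (hz : z ∈ C k) (hw : w ∈ C l) (hxy : Q.Adj x y)
    (hxz : Q.Adj x z) (hyw : Q.Adj y w) : Q.Adj x w ∨ Q.Adj y z := by
  obtain rfl := h.eq_of_adj_of_mem_B_of_mem_B hx hy hxy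
  obtain rfl := h.eq_of_adj_of_mem_B_of_mem_C hx hz hxz
  obtain rfl := h.eq_of_adj_of_mem_B_of_mem_C hy hw hyw
  obtain ⟨-, -, -, -, -, -, -, -, -, -, -, -, -, -, -, -, hnest, -⟩ := h
  rcases hnest i x hx y hy with hsub | hsub
  exacts [.inr (hsub ⟨hxz, hz⟩).1, .inl (hsub ⟨hyw, hw⟩).1]

theorem nonempty_pentagon_embedding (h : VillaCore Q A B C) : Nonempty (pentagon t ↪g Q) := by
  obtain ⟨-, -, -, hdCC, -, -, -, -, ⟨a, ha⟩, -, hC, -, -, -, -, -, -, -, hB⟩ := id h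
  choose b hb hbC using hB
  choose c hc using hC
  let f : Unit ⊕ Fin t ⊕ Fin t → W := Sum.elim (fun _ => a) (Sum.elim b c)
  have hf : ∀ x, f x ∈ villaPart A B C x := by
    rintro (_ | i | i)
    exacts [ha, hb i, hc i]
  have hinj : Function.Injective f := fun x y hxy => by
    by_contra hne
    exact (h.pairwise_disjoint_villaPart hne).ne_of_mem (hf x) (hf y) hxy
  have hbb : ∀ i j, ¬Q.Adj (b i) (b j) := fun i j hij => by
    obtain rfl := h.eq_of_adj_of_mem_B_of_mem_B (hb i) (hb j) hij
    exact Q.irrefl hij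
  have hbc : ∀ i j, Q.Adj (b i) (c j) ↔ i = j := fun i j =>
    ⟨h.eq_of_adj_of_mem_B_of_mem_C (hb i) (hc j), by rintro rfl; exact hbC i (hc i)⟩
  have hcc : ∀ i j, Q.Adj (c i) (c j) ↔ i ≠ j := fun i j =>
    ⟨fun hij hi => hij.ne (congrArg c hi),
      fun hij => h.adj_of_mem_C (hc i) (hc j) ((hdCC i j hij).ne_of_mem (hc i) (hc j))⟩
  refine ⟨⟨⟨f, hinj⟩, fun {x y} => ?_⟩⟩
  rcases x with _ | i | i <;> rcases y with _ | j | j <;> simp [f, pentagon]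
  · exact h.adj_of_mem_A_of_mem_B ha (hb j)
  · exact h.not_adj_of_mem_A_of_mem_C ha (hc j)
  · exact (h.adj_of_mem_A_of_mem_B ha (hb i)).symm
  · exact hbb i j
  · exact hbc i j
  · exact fun hca => h.not_adj_of_mem_A_of_mem_C ha (hc i) hca.symm
  · rw [Q.adj_comm]
    exact hbc j i
  · exact hcc i j

end VillaCore

namespace IsVillaPartition

variable {t : ℕ} {Q : SimpleGraph W} {A : Set W} {B C : Fin t → Set W}

theorem mem_cases (hV : IsVillaPartition Q A B C) (v : W) :
    v ∈ A ∨ (∃ i, v ∈ B i) ∨ ∃ i, v ∈ C i := by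
  have hv : v ∈ A ∪ (⋃ i, B i) ∪ ⋃ i, C i := hV.2 ▸ Set.mem_univ v
  simpa only [Set.mem_union, Set.mem_iUnion, or_assoc] using hv

theorem exists_mem_C_of_not_adj (hV : IsVillaPartition Q A B C) {a v : W} (ha : a ∈ A)
    (hva : v ≠ a) (hav : ¬Q.Adj a v) : ∃ i, v ∈ C i := by
  rcases hV.mem_cases v with hv | ⟨i, hv⟩ | hv
  · exact absurd (hV.1.adj_of_mem_A ha hv hva.symm) hav
  · exact absurd (hV.1.adj_of_mem_A_of_mem_B ha hv) hav
  · exact hv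

theorem mem_B_of_adj_of_adj (hV : IsVillaPartition Q A B C) {a c v : W} {i : Fin t}
    (ha : a ∈ A) (hc : c ∈ C i) (hav : Q.Adj a v) (hcv : Q.Adj c v) : v ∈ B i := by
  rcases hV.mem_cases v with hv | ⟨j, hv⟩ | ⟨j, hv⟩
  · exact absurd hcv.symm (hV.1.not_adj_of_mem_A_of_mem_C hv hc)
  · obtain rfl := hV.1.eq_of_adj_of_mem_B_of_mem_C hv hc hcv.symm
    exact hv
  · exact absurd hav (hV.1.not_adj_of_mem_A_of_mem_C ha hv)

theorem embedding_not_mem_A (hV : IsVillaPartition Q A B C) {H : SimpleGraph V} (f : H ↪g Q)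
    (hH : IsVillaObstruction H) (u : V) : f u ∉ A := by
  intro hu
  rcases hH.1 u with ⟨p, q, hpu, hqu, hpq, hup, huq, hnpq⟩ |
    ⟨w, p, q, hwu, huw, hpq, hnpq, hup, huq, hwp, hwq⟩
  · obtain ⟨i, hp⟩ := hV.exists_mem_C_of_not_adj hu (f.injective.ne hpu) (mt f.map_adj_iff.1 hup)
    obtain ⟨j, hq⟩ := hV.exists_mem_C_of_not_adj hu (f.injective.ne hqu) (mt f.map_adj_iff.1 huq)
    exact hnpq (f.map_adj_iff.1 (hV.1.adj_of_mem_C hp hq (f.injective.ne hpq)))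
  · obtain ⟨i, hw⟩ := hV.exists_mem_C_of_not_adj hu (f.injective.ne hwu) (mt f.map_adj_iff.1 huw)
    have hp := hV.mem_B_of_adj_of_adj hu hw (f.map_adj_iff.2 hup) (f.map_adj_iff.2 hwp)
    have hq := hV.mem_B_of_adj_of_adj hu hw (f.map_adj_iff.2 huq) (f.map_adj_iff.2 hwq)
    exact hnpq (f.map_adj_iff.1 (hV.1.adj_of_mem_B hp hq (f.injective.ne hpq)))

open Classical in
theorem villaSplit_of_embedding (hV : IsVillaPartition Q A B C) {H : SimpleGraph V}
    (f : H ↪g Q) (hA : ∀ u, f u ∉ A) : VillaSplit H fun u => decide (∃ i, f u ∈ C i) := by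
  have hC : ∀ u, decide (∃ i, f u ∈ C i) = true → ∃ i, f u ∈ C i := fun _ => of_decide_eq_true
  have hB : ∀ u, (!decide (∃ i, f u ∈ C i)) = true → ∃ i, f u ∈ B i := fun u hu =>
    ((hV.mem_cases (f u)).resolve_left (hA u)).resolve_right (by simpa using hu)
  refine ⟨fun x y hx hy hxy => ?_, fun x y z hx hy hz hxy hyz hxz => ?_,
    fun x y z w hx hy hz hw hxy hxz hyw => ?_⟩
  · obtain ⟨i, hx⟩ := hC x hx
    obtain ⟨j, hy⟩ := hC y hy
    exact f.map_adj_iff.1 (hV.1.adj_of_mem_C hx hy (f.injective.ne hxy))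
  · obtain ⟨i, hx⟩ := hB x hx
    obtain ⟨j, hy⟩ := hB y hy
    obtain ⟨k, hz⟩ := hB z hz
    exact f.map_adj_iff.1 (hV.1.adj_of_adj_of_adj_of_mem_B hx hy hz (f.map_adj_iff.2 hxy)
      (f.map_adj_iff.2 hyz) (f.injective.ne hxz))
  · obtain ⟨i, hx⟩ := hB x hx
    obtain ⟨j, hy⟩ := hB y hy
    obtain ⟨k, hz⟩ := hC z hz
    obtain ⟨l, hw⟩ := hC w hw
    simpa only [f.map_adj_iff] using hV.1.adj_or_adj_of_adj_of_mem_B hx hy hz hw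
      (f.map_adj_iff.2 hxy) (f.map_adj_iff.2 hxz) (f.map_adj_iff.2 hyw)

theorem indFree (hV : IsVillaPartition Q A B C) {H : SimpleGraph V} (hH : IsVillaObstruction H) :
    IndFree Q H :=
  ⟨fun f => hH.2 _ (hV.villaSplit_of_embedding f (hV.embedding_not_mem_A f hH))⟩

theorem compl_reachable_of_mem_A [Nontrivial (Fin t)] (hV : IsVillaPartition Q A B C) {a : W}
    (ha : a ∈ A) (v : W) : Qᶜ.Reachable v a := by
  obtain ⟨-, -, -, -, -, -, -, -, -, -, hC, -⟩ := id hV.1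
  have hCa : ∀ {c i}, c ∈ C i → Qᶜ.Reachable c a := fun hc =>
    (hV.1.compl_adj_of_mem_A_of_mem_C ha hc).symm.reachable
  rcases hV.mem_cases v with hv | ⟨i, hv⟩ | ⟨i, hv⟩
  · obtain ⟨c, hc⟩ := hC (Classical.arbitrary _)
    exact (hV.1.compl_adj_of_mem_A_of_mem_C hv hc).reachable.trans (hCa hc)
  · obtain ⟨j, hji⟩ := exists_ne i
    obtain ⟨c, hc⟩ := hC j
    exact (hV.1.compl_adj_of_mem_B_of_mem_C hji.symm hv hc).reachable.trans (hCa hc)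
  · exact hCa hv

theorem connected_compl [Nontrivial (Fin t)] (hV : IsVillaPartition Q A B C) : Qᶜ.Connected := by
  obtain ⟨-, -, -, -, -, -, -, -, ⟨a, ha⟩, -⟩ := id hV.1
  exact (connected_iff_exists_forall_reachable _).2
    ⟨a, fun v => (hV.compl_reachable_of_mem_A ha v).symm⟩

theorem not_isUniversal [Nontrivial (Fin t)] (hV : IsVillaPartition Q A B C) (v : W) :
    ¬IsUniversal Q v := by
  obtain ⟨-, -, -, -, -, -, -, -, ⟨a, ha⟩, -, hC, -⟩ := id hV.1
  obtain ⟨c, hc⟩ := hC (Classical.arbitrary _)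
  have : Nontrivial W := nontrivial_of_ne a c (hV.1.compl_adj_of_mem_A_of_mem_C ha hc).ne
  exact not_isUniversal_of_connected_compl hV.connected_compl v

theorem not_isSimplicial [Nontrivial (Fin t)] (hV : IsVillaPartition Q A B C) (v : W) :
    ¬IsSimplicial Q v := by
  obtain ⟨-, -, hdBB, hdCC, -, -, -, -, ⟨a, ha⟩, hB, hC, -, -, -, -, -, -, hBC, hfull⟩ := id hV.1
  rcases hV.mem_cases v with hv | ⟨i, hv⟩ | ⟨i, hv⟩
  · obtain ⟨i, j, hij⟩ := exists_pair_ne (Fin t)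
    obtain ⟨x, hx⟩ := hB i
    obtain ⟨y, hy⟩ := hB j
    exact not_isSimplicial_of_adj (hV.1.adj_of_mem_A_of_mem_B hv hx)
      (hV.1.adj_of_mem_A_of_mem_B hv hy) ((hdBB i j hij).ne_of_mem hx hy)
      (fun hxy => hij (hV.1.eq_of_adj_of_mem_B_of_mem_B hx hy hxy))
  · obtain ⟨c, hvc, hc⟩ := hBC i v hv
    exact not_isSimplicial_of_adj (hV.1.adj_of_mem_A_of_mem_B ha hv).symm hvc
      (hV.1.compl_adj_of_mem_A_of_mem_C ha hc).ne (hV.1.not_adj_of_mem_A_of_mem_C ha hc)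
  · obtain ⟨b, hb, hbC⟩ := hfull i
    obtain ⟨j, hji⟩ := exists_ne i
    obtain ⟨c, hc⟩ := hC j
    have hbc := (compl_adj Q b c).1 (hV.1.compl_adj_of_mem_B_of_mem_C hji.symm hb hc)
    exact not_isSimplicial_of_adj (hbC hv).symm
      (hV.1.adj_of_mem_C hv hc ((hdCC i j hji.symm).ne_of_mem hv hc)) hbc.1 hbc.2

end IsVillaPartition

theorem statement_8_general {W : Type} (t : ℕ) (ht : 3 ≤ t) (Q : SimpleGraph W)
    (hQ : IsTVilla t Q) :
    (IndFree Q twoP3 ∧ IndFree Q (cycleG 4) ∧ IndFree Q (cycleG 6) ∧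
      IndFree Q (cycleG 7) ∧ IndFree Q T0) ∧
    Nonempty (pentagon t ↪g Q) ∧
    Qᶜ.Connected ∧ (∀ v : W, ¬ IsSimplicial Q v) ∧ (∀ v : W, ¬ IsUniversal Q v) := by
  obtain ⟨A, B, C, hV⟩ := hQ
  have : Nontrivial (Fin t) := Fin.nontrivial_iff_two_le.2 (by omega)
  exact ⟨⟨hV.indFree twoP3_isVillaObstruction, hV.indFree cycleG_four_isVillaObstruction,
      hV.indFree cycleG_six_isVillaObstruction, hV.indFree cycleG_seven_isVillaObstruction,
      hV.indFree T0_isVillaObstruction⟩,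
    hV.1.nonempty_pentagon_embedding, hV.connected_compl, hV.not_isSimplicial, hV.not_isUniversal⟩

theorem statement_8 {W : Type} [Fintype W] (t : ℕ) (ht : 3 ≤ t) (Q : SimpleGraph W)
    (hQ : IsTVilla t Q) :
    (IndFree Q twoP3 ∧ IndFree Q (cycleG 4) ∧ IndFree Q (cycleG 6) ∧
      IndFree Q (cycleG 7) ∧ IndFree Q T0) ∧
    Nonempty (pentagon t ↪g Q) ∧
    Qᶜ.Connected ∧ (∀ v : W, ¬ IsSimplicial Q v) ∧ (∀ v : W, ¬ IsUniversal Q v) :=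
  statement_8_general t ht Q hQ

end Paper
end
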